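/- Let G ⊂ U(H) be a finite subgroup and define, for unit vectors ψ with F_G(ψ) > 0, the G-stabilizer extent ξ_G(ψ) as the minimum of (Σ_i |c_i|)² over all decompositions P_{Span(SS_G)} ψ = Σ_i c_i s_i with s_i ∈ SS_G. Then for any unit vector ω ∈ H with F_G(ω) > 0, one has ξ_G(ψ) ≥ |⟨ψ, ω⟩|² / F_G(ω), provided ψ lies in Span(SS_G). -/

import Mathlib

/-!
Expanding `ψ = ∑ cᵢ sᵢ` gives `⟨ψ, ω⟩ = ∑ conj cᵢ ⟨sᵢ, ω⟩`, and every overlap satisfies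
`|⟨sᵢ, ω⟩| ≤ √F_G(ω)`, so `|⟨ψ, ω⟩|² ≤ (∑ |cᵢ|)² F_G(ω)` for every decomposition. Since `ψ` lies in
the span, `Pψ = ψ` and decompositions exist, so the bound passes to the infimum.
-/

open Matrix

/-- The set of `G`-stabilizer states: unit vectors `s` such that the joint fixed subspace of
some subgroup `G' ≤ G` is exactly the complex line `ℂ · s`. -/
def StabStates (n : ℕ) (G : Subgroup (Matrix.unitaryGroup (Fin n) ℂ)) :
    Set (Fin n → ℂ) :=
  {s | star s ⬝ᵥ s = 1 ∧
    ∃ G' : Subgroup (Matrix.unitaryGroup (Fin n) ℂ), G' ≤ G ∧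
      {v : Fin n → ℂ | ∀ g ∈ G', (g : Matrix (Fin n) (Fin n) ℂ).mulVec v = v}
        = {v : Fin n → ℂ | ∃ c : ℂ, v = c • s}}

/-- The `G`-stabilizer fidelity `F_G(ψ) = sup_{s ∈ SS_G} |⟨s,ψ⟩|²`. -/
noncomputable def stabFidelity (n : ℕ) (G : Subgroup (Matrix.unitaryGroup (Fin n) ℂ))
    (ψ : Fin n → ℂ) : ℝ :=
  sSup {x : ℝ | ∃ s ∈ StabStates n G, x = ‖star s ⬝ᵥ ψ‖ ^ 2}

/-- The `G`-stabilizer extent `ξ_G(ψ)`: the infimum of `(∑ᵢ |cᵢ|)²` over all finite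
decompositions `P ψ = ∑ᵢ cᵢ sᵢ` with each `sᵢ` a `G`-stabilizer state, where `P` is the
orthogonal projection onto the span of the `G`-stabilizer states. -/
noncomputable def stabExtent (n : ℕ) (G : Subgroup (Matrix.unitaryGroup (Fin n) ℂ))
    (P : Matrix (Fin n) (Fin n) ℂ) (ψ : Fin n → ℂ) : ℝ :=
  sInf {x : ℝ | ∃ (k : ℕ) (c : Fin k → ℂ) (s : Fin k → (Fin n → ℂ)),
    (∀ i, s i ∈ StabStates n G) ∧ P.mulVec ψ = ∑ i, c i • s i ∧ x = (∑ i, ‖c i‖) ^ 2}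

open WithLp

lemma norm_star_dotProduct_le {𝕜 ι : Type*} [RCLike 𝕜] [Fintype ι] (a b : ι → 𝕜) :
    ‖star a ⬝ᵥ b‖ ≤ ‖toLp 2 a‖ * ‖toLp 2 b‖ := by
  rw [dotProduct_comm, ← EuclideanSpace.inner_toLp_toLp]
  exact norm_inner_le_norm _ _

lemma norm_toLp_eq_one_of_star_dotProduct_self {𝕜 ι : Type*} [RCLike 𝕜] [Fintype ι]
    {a : ι → 𝕜} (ha : star a ⬝ᵥ a = 1) : ‖toLp 2 a‖ = 1 := by
  have h := inner_self_eq_norm_sq_to_K (𝕜 := 𝕜) (toLp 2 a)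
  rw [EuclideanSpace.inner_toLp_toLp, dotProduct_comm, ha] at h
  have h' : ‖toLp 2 a‖ ^ 2 = 1 := by exact_mod_cast h.symm
  exact (pow_eq_one_iff_of_nonneg (norm_nonneg _) two_ne_zero).1 h'

section StabilizerStates

variable {n : ℕ} {G : Subgroup (Matrix.unitaryGroup (Fin n) ℂ)}

lemma norm_star_dotProduct_le_of_mem_stabStates {s : Fin n → ℂ} (hs : s ∈ StabStates n G)
    (ω : Fin n → ℂ) : ‖star s ⬝ᵥ ω‖ ≤ ‖toLp 2 ω‖ := by
  simpa [norm_toLp_eq_one_of_star_dotProduct_self hs.1] using norm_star_dotProduct_le s ω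

lemma sq_norm_star_dotProduct_le_stabFidelity {s : Fin n → ℂ} (hs : s ∈ StabStates n G)
    (ω : Fin n → ℂ) : ‖star s ⬝ᵥ ω‖ ^ 2 ≤ stabFidelity n G ω := by
  refine le_csSup ⟨‖toLp 2 ω‖ ^ 2, ?_⟩ ⟨s, hs, rfl⟩
  rintro _ ⟨t, ht, rfl⟩
  gcongr
  exact norm_star_dotProduct_le_of_mem_stabStates ht ω

lemma stabFidelity_nonneg (ω : Fin n → ℂ) : 0 ≤ stabFidelity n G ω :=
  Real.sSup_nonneg (by rintro _ ⟨s, -, rfl⟩; positivity)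

lemma sq_norm_star_sum_smul_dotProduct_le {ι : Type*} [Fintype ι] {c : ι → ℂ}
    {s : ι → Fin n → ℂ} (hs : ∀ i, s i ∈ StabStates n G) (ω : Fin n → ℂ) :
    ‖star (∑ i, c i • s i) ⬝ᵥ ω‖ ^ 2 ≤ (∑ i, ‖c i‖) ^ 2 * stabFidelity n G ω := by
  have hF := stabFidelity_nonneg (G := G) ω
  have hexpand : star (∑ i, c i • s i) ⬝ᵥ ω = ∑ i, star (c i) * (star (s i) ⬝ᵥ ω) := by
    simp only [star_sum, star_smul, sum_dotProduct, smul_dotProduct, smul_eq_mul]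
  have hterm : ∀ i, ‖star (c i) * (star (s i) ⬝ᵥ ω)‖ ≤ ‖c i‖ * √(stabFidelity n G ω) := by
    intro i
    rw [norm_mul, norm_star]
    gcongr
    exact Real.le_sqrt_of_sq_le (sq_norm_star_dotProduct_le_stabFidelity (hs i) ω)
  calc ‖star (∑ i, c i • s i) ⬝ᵥ ω‖ ^ 2
      ≤ ((∑ i, ‖c i‖) * √(stabFidelity n G ω)) ^ 2 := by
        rw [hexpand, Finset.sum_mul]
        gcongr
        exact (norm_sum_le _ _).trans (Finset.sum_le_sum fun i _ => hterm i)
    _ = (∑ i, ‖c i‖) ^ 2 * stabFidelity n G ω := by rw [mul_pow, Real.sq_sqrt hF]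

end StabilizerStates

theorem stmt7_general (n : ℕ) (G : Subgroup (Matrix.unitaryGroup (Fin n) ℂ))
    (P : Matrix (Fin n) (Fin n) ℂ)
    (hP_fix : ∀ v ∈ Submodule.span ℂ (StabStates n G), P.mulVec v = v)
    (ψ ω : Fin n → ℂ)
    (hψ_span : ψ ∈ Submodule.span ℂ (StabStates n G)) :
    stabExtent n G P ψ ≥ ‖star ψ ⬝ᵥ ω‖ ^ 2 / stabFidelity n G ω := by
  have hPψ : P.mulVec ψ = ψ := hP_fix ψ hψ_span
  obtain ⟨k, c, s, hsum⟩ := Submodule.mem_span_set'.1 hψ_span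
  refine le_csInf ⟨_, k, c, fun i => s i, fun i => (s i).2, by rw [hPψ, hsum], rfl⟩ ?_
  rintro _ ⟨k, c, s, hs, hdecomp, rfl⟩
  -- `div_le_of_le_mul₀` also covers `F_G(ω) = 0`, where the quotient is the junk value `0`.
  refine div_le_of_le_mul₀ (stabFidelity_nonneg ω) (by positivity) ?_
  rw [← hPψ, hdecomp]
  exact sq_norm_star_sum_smul_dotProduct_le hs ω

/-- For unit vectors `ψ, ω` with positive `G`-stabilizer fidelity and `ψ`
lying in the span of the `G`-stabilizer states, the `G`-stabilizer extent satisfies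
`ξ_G(ψ) ≥ |⟨ψ,ω⟩|² / F_G(ω)`. -/
theorem stmt7 (n : ℕ) (G : Subgroup (Matrix.unitaryGroup (Fin n) ℂ)) [Fintype G]
    (P : Matrix (Fin n) (Fin n) ℂ)
    (hP_herm : Pᴴ = P) (hP_idem : P * P = P)
    (hP_range : ∀ v : Fin n → ℂ, P.mulVec v ∈ Submodule.span ℂ (StabStates n G))
    (hP_fix : ∀ v ∈ Submodule.span ℂ (StabStates n G), P.mulVec v = v)
    (ψ ω : Fin n → ℂ)
    (hψ_unit : star ψ ⬝ᵥ ψ = 1) (hω_unit : star ω ⬝ᵥ ω = 1)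
    (hψF : 0 < stabFidelity n G ψ) (hωF : 0 < stabFidelity n G ω)
    (hψ_span : ψ ∈ Submodule.span ℂ (StabStates n G)) :
    stabExtent n G P ψ ≥ ‖star ψ ⬝ᵥ ω‖ ^ 2 / stabFidelity n G ω :=
  stmt7_general n G P hP_fix ψ ω hψ_span
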